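/- The braid group Bₙ on n strands is torsion-free: if B ∈ Bₙ satisfies B^k = 1 for some integer k ≥ 1, then B = 1. -/

import Mathlib

/-!
Garside's head lemma: if `a·u = b·v` in the positive braid monoid, then `u` and `v` are divisible
by the complements of `a` and `b` in their least common multiple. It is proved by induction on the
length along the chain of braid moves relating the two words, and the inductive step is Dehornoy's
cube condition on three letters. The lemma gives cancellativity and least common multiples; since
the fundamental braid `Δ` is quasi-central and divisible by every letter, every positive word of
length `k` divides `Δᵏ`, so any two positive braids have common multiples. Hence the positive
monoid embeds into its group of fractions, and the positive braids `P` form the positive cone of a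
left-invariant lattice order `g ≼ h ↔ g⁻¹ * h ∈ P` on `Bₙ`. If `B` has finite order, left
multiplication by `B` permutes the finite group `⟨B⟩` and preserves `≼`, so it fixes the join `ℓ`
of `⟨B⟩`; from `B * ℓ = ℓ` we get `B = 1`.
-/

/-- The braid relations on the generators `σ₁, …, σ_{n-1}` (indexed by `Fin (n-1)`):
`σᵢσⱼ = σⱼσᵢ` for `|i − j| ≥ 2`, and `σᵢσ_{i+1}σᵢ = σ_{i+1}σᵢσ_{i+1}`. -/
def braidRels (n : ℕ) : Set (FreeGroup (Fin (n - 1))) :=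
  {r | (∃ i j : Fin (n - 1), (i : ℕ) + 2 ≤ (j : ℕ) ∧
          r = FreeGroup.of i * FreeGroup.of j * (FreeGroup.of i)⁻¹ * (FreeGroup.of j)⁻¹) ∨
       (∃ i j : Fin (n - 1), (j : ℕ) = (i : ℕ) + 1 ∧
          r = FreeGroup.of i * FreeGroup.of j * FreeGroup.of i *
              (FreeGroup.of j * FreeGroup.of i * FreeGroup.of j)⁻¹)}

/-- The Artin braid group `Bₙ` on `n` strands, presented with generators
`σ₁, …, σ_{n-1}` and the braid relations. -/
abbrev BraidGroup (n : ℕ) := PresentedGroup (braidRels n)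

open scoped Pointwise

namespace Submonoid

variable {G : Type*} [Group G] (P : Submonoid G)

def LeftDvd (g h : G) : Prop := g⁻¹ * h ∈ P

def IsLcm (S : Set G) (ℓ : G) : Prop :=
  (∀ g ∈ S, P.LeftDvd g ℓ) ∧ ∀ h, (∀ g ∈ S, P.LeftDvd g h) → P.LeftDvd ℓ h

structure IsLatticeCone : Prop where
  eq_one_of_inv_mem : ∀ p ∈ P, p⁻¹ ∈ P → p = 1
  exists_mul_eq_mul : ∀ p ∈ P, ∀ q ∈ P, ∃ x ∈ P, ∃ y ∈ P, x * p = y * q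
  closure_eq_top : Subgroup.closure (P : Set G) = ⊤
  exists_isLcm : ∀ p ∈ P, ∀ q ∈ P, ∃ ℓ, P.IsLcm {p, q} ℓ

variable {P}

lemma leftDvd_refl (g : G) : P.LeftDvd g g := by
  simp [LeftDvd, one_mem]

lemma LeftDvd.trans {g h k : G} (hgh : P.LeftDvd g h) (hhk : P.LeftDvd h k) : P.LeftDvd g k := by
  simpa [LeftDvd, mul_assoc] using P.mul_mem hgh hhk

@[simp] lemma leftDvd_mul_left_iff (c g h : G) : P.LeftDvd (c * g) (c * h) ↔ P.LeftDvd g h := by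
  simp [LeftDvd, mul_assoc]

lemma isLcm_singleton (g : G) : P.IsLcm {g} g :=
  ⟨by simpa using leftDvd_refl g, fun _ h => h g rfl⟩

lemma IsLcm.insert {S : Set G} {g ℓ m : G} (hS : P.IsLcm S ℓ) (hm : P.IsLcm {g, ℓ} m) :
    P.IsLcm (insert g S) m := by
  refine ⟨?_, fun k hk => hm.2 k ?_⟩
  · rintro s (rfl | hs)
    · exact hm.1 s (by simp)
    · exact (hS.1 s hs).trans (hm.1 ℓ (by simp))
  · rintro s (rfl | rfl)
    · exact hk s (by simp)
    · exact hS.2 k fun s hs => hk s (Set.mem_insert_of_mem _ hs)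

lemma IsLcm.smul {S : Set G} {ℓ : G} (h : P.IsLcm S ℓ) (c : G) : P.IsLcm (c • S) (c * ℓ) := by
  refine ⟨?_, fun k hk => ?_⟩
  · rintro _ ⟨g, hg, rfl⟩
    simpa using h.1 g hg
  · have := h.2 (c⁻¹ * k) fun g hg => by
      simpa using (leftDvd_mul_left_iff c⁻¹ (c * g) k).2 (hk _ ⟨g, hg, rfl⟩)
    simpa using (leftDvd_mul_left_iff c ℓ (c⁻¹ * k)).2 this

namespace IsLatticeCone

lemma leftDvd_antisymm (hP : P.IsLatticeCone) {g h : G} (hgh : P.LeftDvd g h)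
    (hhg : P.LeftDvd h g) : g = h :=
  inv_mul_eq_one.mp <| hP.eq_one_of_inv_mem _ hgh (by simpa [LeftDvd] using hhg)

lemma isLcm_unique (hP : P.IsLatticeCone) {S : Set G} {ℓ ℓ' : G} (h : P.IsLcm S ℓ)
    (h' : P.IsLcm S ℓ') : ℓ = ℓ' :=
  hP.leftDvd_antisymm (h.2 ℓ' h'.1) (h'.2 ℓ h.1)

lemma exists_inv_mul_eq (hP : P.IsLatticeCone) (g : G) : ∃ a ∈ P, ∃ b ∈ P, a⁻¹ * b = g := by
  have hg : g ∈ Subgroup.closure (P : Set G) := hP.closure_eq_top ▸ Subgroup.mem_top g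
  induction hg using Subgroup.closure_induction with
  | mem p hp => exact ⟨1, P.one_mem, p, hp, by simp⟩
  | one => exact ⟨1, P.one_mem, 1, P.one_mem, by simp⟩
  | mul g h _ _ ihg ihh =>
    obtain ⟨a, ha, b, hb, rfl⟩ := ihg
    obtain ⟨c, hc, d, hd, rfl⟩ := ihh
    obtain ⟨x, hx, y, hy, hxy⟩ := hP.exists_mul_eq_mul b hb c hc
    refine ⟨x * a, P.mul_mem hx ha, y * d, P.mul_mem hy hd, ?_⟩
    calc (x * a)⁻¹ * (y * d) = a⁻¹ * x⁻¹ * (y * c) * c⁻¹ * d := by group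
      _ = a⁻¹ * b * (c⁻¹ * d) := by rw [← hxy]; group
  | inv g _ ih =>
    obtain ⟨a, ha, b, hb, rfl⟩ := ih
    exact ⟨b, hb, a, ha, by group⟩

lemma exists_isLcm_pair (hP : P.IsLatticeCone) (g h : G) : ∃ ℓ, P.IsLcm {g, h} ℓ := by
  obtain ⟨a, ha, b, hb, rfl⟩ := hP.exists_inv_mul_eq g
  obtain ⟨c, hc, d, hd, rfl⟩ := hP.exists_inv_mul_eq h
  obtain ⟨x, hx, y, hy, hxy⟩ := hP.exists_mul_eq_mul a ha c hc
  obtain ⟨ℓ, hℓ⟩ := hP.exists_isLcm (x * b) (P.mul_mem hx hb) (y * d) (P.mul_mem hy hd)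
  refine ⟨(x * a)⁻¹ * ℓ, ?_⟩
  convert hℓ.smul (x * a)⁻¹ using 1
  have hb' : (x * a)⁻¹ * (x * b) = a⁻¹ * b := by group
  have hd' : (x * a)⁻¹ * (y * d) = c⁻¹ * d := by rw [hxy]; group
  simp only [Set.smul_set_insert, Set.smul_set_singleton, smul_eq_mul, hb', hd']

lemma exists_isLcm_of_finite (hP : P.IsLatticeCone) {S : Set G} (hS : S.Finite)
    (hne : S.Nonempty) : ∃ ℓ, P.IsLcm S ℓ := by
  induction S, hS using Set.Finite.induction_on with
  | empty => exact absurd hne Set.not_nonempty_empty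
  | @insert g S _ _ ih =>
    rcases S.eq_empty_or_nonempty with rfl | hS
    · exact ⟨g, by simpa using isLcm_singleton (P := P) g⟩
    · obtain ⟨ℓ, hℓ⟩ := ih hS
      obtain ⟨m, hm⟩ := hP.exists_isLcm_pair g ℓ
      exact ⟨m, hℓ.insert hm⟩

theorem eq_one_of_isOfFinOrder (hP : P.IsLatticeCone) {B : G} (hB : IsOfFinOrder B) : B = 1 := by
  obtain ⟨ℓ, hℓ⟩ := hP.exists_isLcm_of_finite hB.finite_zpowers ⟨1, Subgroup.one_mem _⟩
  have hBℓ := hℓ.smul B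
  rw [smul_coe_set (Subgroup.mem_zpowers B)] at hBℓ
  simpa using hP.isLcm_unique hBℓ hℓ

end IsLatticeCone
end Submonoid

namespace Braid

def Far (i j : ℕ) : Prop := i + 2 ≤ j ∨ j + 2 ≤ i

def Adj (i j : ℕ) : Prop := j = i + 1 ∨ i = j + 1

instance : DecidableRel Far := fun _ _ => inferInstanceAs (Decidable (_ ∨ _))

lemma Far.symm {i j : ℕ} (h : Far i j) : Far j i := h.elim .inr .inl

lemma Adj.symm {i j : ℕ} (h : Adj i j) : Adj j i := h.elim .inr .inl

lemma eq_or_adj_or_far (i j : ℕ) : i = j ∨ Adj i j ∨ Far i j := by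
  unfold Adj Far; omega

lemma Far.not_adj {i j : ℕ} (h : Far i j) : ¬Adj i j := by
  unfold Adj Far at *; omega

-- Letter `i` stands for the generator `σᵢ₊₁` (`PresentedGroup.of i` in `BraidGroup n` when
-- `i < n - 1`); words in all letters `i : ℕ` are positive braids on infinitely many strands.
inductive Step : List ℕ → List ℕ → Prop
  | swap (u v : List ℕ) {i j : ℕ} (h : Far i j) : Step (u ++ i :: j :: v) (u ++ j :: i :: v)
  | braid (u v : List ℕ) {i j : ℕ} (h : Adj i j) :
      Step (u ++ i :: j :: i :: v) (u ++ j :: i :: j :: v)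

namespace Step

variable {u v : List ℕ}

lemma symm (h : Step u v) : Step v u := by
  cases h with
  | swap u v h => exact .swap u v h.symm
  | braid u v h => exact .braid u v h.symm

lemma append_left (p : List ℕ) (h : Step u v) : Step (p ++ u) (p ++ v) := by
  cases h with
  | swap u v h => simpa using swap (p ++ u) v h
  | braid u v h => simpa using braid (p ++ u) v h

lemma append_right (h : Step u v) (q : List ℕ) : Step (u ++ q) (v ++ q) := by
  cases h with
  | swap u v h => simpa using swap u (v ++ q) h
  | braid u v h => simpa using braid u (v ++ q) h

lemma reverse (h : Step u v) : Step u.reverse v.reverse := by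
  cases h with
  | swap u v h => simpa using swap v.reverse u.reverse h.symm
  | braid u v h => simpa using braid v.reverse u.reverse h

lemma length_eq (h : Step u v) : u.length = v.length := by
  cases h <;> simp

lemma subset (h : Step u v) : v ⊆ u := by
  cases h <;> intro x <;> simp +contextual [or_imp]

end Step

def WordEquiv : List ℕ → List ℕ → Prop := Relation.ReflTransGen Step

infix:50 " ≋ " => WordEquiv

namespace WordEquiv

variable {u v w : List ℕ}

lemma refl (w : List ℕ) : w ≋ w := Relation.ReflTransGen.refl

lemma rfl : w ≋ w := Relation.ReflTransGen.refl

lemma trans (h : u ≋ v) (h' : v ≋ w) : u ≋ w := Relation.ReflTransGen.trans h h'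

instance : Trans WordEquiv WordEquiv WordEquiv := ⟨trans⟩

lemma swap (p : List ℕ) {i j : ℕ} (h : Far i j) (q : List ℕ) :
    p ++ i :: j :: q ≋ p ++ j :: i :: q :=
  .single (.swap p q h)

lemma braid (p : List ℕ) {i j : ℕ} (h : Adj i j) (q : List ℕ) :
    p ++ i :: j :: i :: q ≋ p ++ j :: i :: j :: q :=
  .single (.braid p q h)

lemma symm (h : u ≋ v) : v ≋ u := by
  induction h with
  | refl => exact rfl
  | tail _ hs ih => exact Relation.ReflTransGen.head hs.symm ih

lemma append_left (p : List ℕ) (h : u ≋ v) : p ++ u ≋ p ++ v :=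
  Relation.ReflTransGen.lift (p ++ ·) (fun _ _ hs => hs.append_left p) _ _ h

lemma append_right (h : u ≋ v) (q : List ℕ) : u ++ q ≋ v ++ q :=
  Relation.ReflTransGen.lift (· ++ q) (fun _ _ hs => hs.append_right q) _ _ h

lemma append {u' v' : List ℕ} (h : u ≋ v) (h' : u' ≋ v') : u ++ u' ≋ v ++ v' :=
  (h.append_right u').trans (h'.append_left v)

lemma cons (a : ℕ) (h : u ≋ v) : a :: u ≋ a :: v := h.append_left [a]

lemma reverse (h : u ≋ v) : u.reverse ≋ v.reverse :=
  Relation.ReflTransGen.lift List.reverse (fun _ _ hs => hs.reverse) _ _ h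

lemma length_eq (h : u ≋ v) : u.length = v.length := by
  induction h with
  | refl => exact Eq.refl _
  | tail _ hs ih => exact ih.trans hs.length_eq

lemma subset (h : u ≋ v) : v ⊆ u := by
  induction h with
  | refl => exact List.Subset.refl _
  | tail _ hs ih => exact List.Subset.trans hs.subset ih

end WordEquiv

lemma cons_append_equiv_of_far {c : ℕ} {w : List ℕ} (h : ∀ y ∈ w, Far c y) (r : List ℕ) :
    c :: (w ++ r) ≋ w ++ c :: r := by
  induction w with
  | nil => exact .rfl
  | cons y w ih =>
    calc c :: y :: (w ++ r) ≋ y :: c :: (w ++ r) := .swap [] (h y (by simp)) _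
      _ ≋ y :: (w ++ c :: r) := (ih fun z hz => h z (by simp [hz])).cons y

-- `a :: compl a b ≋ b :: compl b a` is the least common right multiple of the letters `a`, `b`.
def compl (a b : ℕ) : List ℕ := if a = b then [] else if Far a b then [b] else [b, a]

variable {a b c : ℕ}

@[simp] lemma compl_self (a : ℕ) : compl a a = [] := by simp [compl]

lemma compl_of_far (h : Far a b) : compl a b = [b] := by
  have : a ≠ b := by unfold Far at h; omega
  simp [compl, this, h]

lemma compl_of_adj (h : Adj a b) : compl a b = [b, a] := by
  have : a ≠ b := by unfold Adj at h; omega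
  have : ¬Far a b := fun hf => hf.not_adj h
  simp [compl, *]

lemma forall_mem_compl {p : ℕ → Prop} (ha : p a) (hb : p b) : ∀ z ∈ compl a b, p z := by
  unfold compl; split_ifs <;> simp [ha, hb]

lemma cons_compl_equiv (a b : ℕ) : a :: compl a b ≋ b :: compl b a := by
  rcases eq_or_adj_or_far a b with rfl | h | h
  · exact .rfl
  · simpa [compl_of_adj h, compl_of_adj h.symm] using WordEquiv.braid [] h []
  · simpa [compl_of_far h, compl_of_far h.symm] using WordEquiv.swap [] h []

def HeadLemmaBelow (F : ℕ) : Prop :=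
  ∀ ⦃a b : ℕ⦄ ⦃u v : List ℕ⦄, u.length < F → a :: u ≋ b :: v →
    ∃ t, u ≋ compl a b ++ t ∧ v ≋ compl b a ++ t

namespace HeadLemmaBelow

variable {F : ℕ} {s s' u v : List ℕ}

lemma cancel_cons (IH : HeadLemmaBelow F) (hl : u.length < F) (h : a :: u ≋ a :: v) : u ≋ v := by
  obtain ⟨t, hu, hv⟩ := IH hl h
  simp only [compl_self, List.nil_append] at hu hv
  exact hu.trans hv.symm

lemma cancel_left (IH : HeadLemmaBelow F) {p : List ℕ} (hl : (p ++ u).length ≤ F)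
    (h : p ++ u ≋ p ++ v) : u ≋ v := by
  induction p with
  | nil => simpa using h
  | cons a p ih =>
    simp only [List.length_append, List.length_cons] at hl ih
    exact ih (by omega) (IH.cancel_cons (by simp; omega) h)

lemma cube_far (IH : HeadLemmaBelow F) (hca : Far c a) (hcb : Far c b) (hl : s.length < F)
    (h : a :: s ≋ b :: s') :
    ∃ t, c :: s ≋ compl a b ++ c :: t ∧ c :: s' ≋ compl b a ++ c :: t := by
  obtain ⟨t, hs, hs'⟩ := IH hl h
  exact ⟨t, (hs.cons c).trans (cons_append_equiv_of_far (forall_mem_compl hca hcb) t),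
    (hs'.cons c).trans (cons_append_equiv_of_far (forall_mem_compl hcb hca) t)⟩

lemma cube_adj_far_far (IH : HeadLemmaBelow F) (hac : Adj a c) (hcb : Far c b) (hab : Far a b)
    (hl : s.length + 1 < F) (h : a :: c :: s ≋ b :: s') :
    ∃ t, c :: a :: s ≋ b :: t ∧ c :: s' ≋ a :: t := by
  obtain ⟨r, hs, hs'⟩ := IH (by simpa) h
  simp only [compl_of_far hab, compl_of_far hab.symm, List.cons_append, List.nil_append] at hs hs'
  obtain ⟨r₂, hs₂, hr⟩ := IH (by omega) hs
  simp only [compl_of_far hcb, compl_of_far hcb.symm, List.cons_append, List.nil_append] at hs₂ hr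
  refine ⟨c :: a :: r₂, ?_, ?_⟩
  · calc c :: a :: s ≋ c :: a :: b :: r₂ := hs₂.append_left [c, a]
      _ ≋ c :: b :: a :: r₂ := .swap [c] hab _
      _ ≋ b :: c :: a :: r₂ := .swap [] hcb _
  · calc c :: s' ≋ c :: a :: c :: r₂ := (hs'.trans (hr.cons a)).cons c
      _ ≋ a :: c :: a :: r₂ := .braid [] hac.symm _

lemma cube_adj_far_adj (IH : HeadLemmaBelow F) (hac : Adj a c) (hcb : Far c b) (hab : Adj a b)
    (hl : s.length + 1 < F) (h : a :: c :: s ≋ b :: s') :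
    ∃ t, c :: a :: s ≋ b :: a :: t ∧ c :: s' ≋ a :: b :: t := by
  obtain ⟨r, hs, hs'⟩ := IH (by simpa) h
  simp only [compl_of_adj hab, compl_of_adj hab.symm, List.cons_append, List.nil_append] at hs hs'
  have hlr := hs.length_eq
  simp only [List.length_cons] at hlr
  obtain ⟨r₂, hs₂, hr⟩ := IH (by omega) hs
  simp only [compl_of_far hcb, compl_of_far hcb.symm, List.cons_append, List.nil_append] at hs₂ hr
  obtain ⟨r₃, hr₃, hr₂⟩ := IH (by omega) hr
  simp only [compl_of_adj hac, compl_of_adj hac.symm, List.cons_append, List.nil_append] at hr₃ hr₂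
  refine ⟨c :: a :: b :: r₃, ?_, ?_⟩
  · calc c :: a :: s ≋ c :: a :: b :: a :: c :: r₃ := (hs₂.trans (hr₂.cons b)).append_left [c, a]
      _ ≋ c :: b :: a :: b :: c :: r₃ := .braid [c] hab _
      _ ≋ b :: c :: a :: b :: c :: r₃ := .swap [] hcb _
      _ ≋ b :: c :: a :: c :: b :: r₃ := .swap [b, c, a] hcb.symm _
      _ ≋ b :: a :: c :: a :: b :: r₃ := .braid [b] hac.symm _
  · calc c :: s' ≋ c :: a :: b :: c :: a :: r₃ := (hs'.trans (hr₃.append_left [a, b])).cons c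
      _ ≋ c :: a :: c :: b :: a :: r₃ := .swap [c, a] hcb.symm _
      _ ≋ a :: c :: a :: b :: a :: r₃ := .braid [] hac.symm _
      _ ≋ a :: c :: b :: a :: b :: r₃ := .braid [a, c] hab _
      _ ≋ a :: b :: c :: a :: b :: r₃ := .swap [a] hcb _

lemma cube_adj_adj_far (IH : HeadLemmaBelow F) (hac : Adj a c) (hcb : Adj c b) (hab : Far a b)
    (hl : s.length + 1 < F) (h : a :: c :: s ≋ b :: c :: s') :
    ∃ t, c :: a :: s ≋ b :: t ∧ c :: b :: s' ≋ a :: t := by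
  obtain ⟨r, hs, hs'⟩ := IH (by simpa) h
  simp only [compl_of_far hab, compl_of_far hab.symm, List.cons_append, List.nil_append] at hs hs'
  have hls := hs.length_eq
  have hls' := hs'.length_eq
  simp only [List.length_cons] at hls hls'
  obtain ⟨r₁, hs₁, hr₁⟩ := IH (by omega) hs
  obtain ⟨r₂, hs₂, hr₂⟩ := IH (by omega) hs'
  simp only [compl_of_adj hcb, compl_of_adj hcb.symm, compl_of_adj hac, compl_of_adj hac.symm,
    List.cons_append, List.nil_append] at hs₁ hr₁ hs₂ hr₂
  have hlr₁ := hr₁.length_eq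
  simp only [List.length_cons] at hlr₁
  obtain ⟨r₃, hr₁₃, hr₂₃⟩ := IH (by omega) (IH.cancel_cons (by simp; omega) (hr₁.symm.trans hr₂))
  simp only [compl_of_far hab, compl_of_far hab.symm, List.cons_append, List.nil_append]
    at hr₁₃ hr₂₃
  refine ⟨c :: b :: a :: c :: r₃, ?_, ?_⟩
  · calc c :: a :: s ≋ c :: a :: b :: c :: a :: r₃ :=
          (hs₁.trans (hr₁₃.append_left [b, c])).append_left [c, a]
      _ ≋ c :: b :: a :: c :: a :: r₃ := .swap [c] hab _
      _ ≋ c :: b :: c :: a :: c :: r₃ := .braid [c, b] hac _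
      _ ≋ b :: c :: b :: a :: c :: r₃ := .braid [] hcb _
  · calc c :: b :: s' ≋ c :: b :: a :: c :: b :: r₃ :=
          (hs₂.trans (hr₂₃.append_left [a, c])).append_left [c, b]
      _ ≋ c :: a :: b :: c :: b :: r₃ := .swap [c] hab.symm _
      _ ≋ c :: a :: c :: b :: c :: r₃ := .braid [c, a] hcb.symm _
      _ ≋ a :: c :: a :: b :: c :: r₃ := .braid [] hac.symm _
      _ ≋ a :: c :: b :: a :: c :: r₃ := .swap [a, c] hab _

lemma cube_of_adj_of_far (IH : HeadLemmaBelow F) (hac : Adj a c) (hcb : Far c b)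
    (hl : s.length + 1 < F) (h : a :: c :: s ≋ b :: s') :
    ∃ t, compl a c ++ s ≋ compl a b ++ t ∧ compl b c ++ s' ≋ compl b a ++ t := by
  simp only [compl_of_adj hac, compl_of_far hcb.symm, List.cons_append, List.nil_append]
  rcases eq_or_adj_or_far a b with rfl | hab | hab
  · exact absurd hac hcb.symm.not_adj
  · simpa [compl_of_adj hab, compl_of_adj hab.symm] using IH.cube_adj_far_adj hac hcb hab hl h
  · simpa [compl_of_far hab, compl_of_far hab.symm] using IH.cube_adj_far_far hac hcb hab hl h

-- Dehornoy's cube condition on three distinct letters, checked according to which pairs are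
-- adjacent.
lemma cube (IH : HeadLemmaBelow F) (hab : a ≠ b) (hac : a ≠ c) (hbc : b ≠ c)
    (hl : (compl c a ++ s).length ≤ F) (h : compl c a ++ s ≋ compl c b ++ s') :
    ∃ t, compl a c ++ s ≋ compl a b ++ t ∧ compl b c ++ s' ≋ compl b a ++ t := by
  have hls := h.length_eq
  obtain hac | hac := (eq_or_adj_or_far a c).resolve_left hac <;>
  obtain hcb | hcb := (eq_or_adj_or_far c b).resolve_left (Ne.symm hbc)
  · obtain hab | hab := (eq_or_adj_or_far a b).resolve_left hab
    · exfalso; unfold Adj at *; omega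
    · simp only [compl_of_adj hac, compl_of_adj hac.symm, compl_of_adj hcb, compl_of_adj hcb.symm,
        compl_of_far hab, compl_of_far hab.symm, List.cons_append, List.nil_append] at hl h ⊢
      exact IH.cube_adj_adj_far hac hcb hab (by simp at hl; omega) h
  · simp only [compl_of_adj hac.symm, compl_of_far hcb, List.cons_append, List.nil_append,
      List.length_cons] at hl h
    exact IH.cube_of_adj_of_far hac hcb (by omega) h
  · simp only [compl_of_far hac.symm, compl_of_adj hcb, List.cons_append, List.nil_append,
      List.length_cons] at hl hls h
    exact (IH.cube_of_adj_of_far hcb.symm hac.symm (by omega) h.symm).imp fun _ => And.symm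
  · simp only [compl_of_far hac, compl_of_far hac.symm, compl_of_far hcb, compl_of_far hcb.symm,
      List.cons_append, List.nil_append] at hl h ⊢
    obtain ⟨t, h₁, h₂⟩ := IH.cube_far hac.symm hcb (by simpa using hl) h
    exact ⟨c :: t, h₁, h₂⟩

-- If `lcm(c, a)` and `lcm(c, b)` both left-divide `c :: x`, then so does `lcm(a, b)`.
lemma trans (IH : HeadLemmaBelow F) {x : List ℕ} (hl : x.length ≤ F) (h₁ : x ≋ compl c a ++ s)
    (h₂ : x ≋ compl c b ++ s') :
    ∃ t, compl a c ++ s ≋ compl a b ++ t ∧ compl b c ++ s' ≋ compl b a ++ t := by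
  by_cases hac : a = c
  · subst hac
    simp only [compl_self, List.nil_append] at h₁ ⊢
    exact ⟨s', h₁.symm.trans h₂, .rfl⟩
  by_cases hbc : b = c
  · subst hbc
    simp only [compl_self, List.nil_append] at h₂ ⊢
    exact ⟨s, .rfl, h₂.symm.trans h₁⟩
  by_cases hab : a = b
  · subst hab
    simp only [compl_self, List.nil_append]
    exact ⟨_, .rfl, (IH.cancel_left (h₂.length_eq ▸ hl) (h₂.symm.trans h₁)).append_left _⟩
  exact IH.cube hab hac hbc (h₁.length_eq ▸ hl) (h₁.symm.trans h₂)

end HeadLemmaBelow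

lemma Step.exists_of_cons {w w' : List ℕ} (h : Step w w') {b c : ℕ} {x v : List ℕ}
    (hw : w = c :: x) (hw' : w' = b :: v) : ∃ s, x ≋ compl c b ++ s ∧ v ≋ compl b c ++ s := by
  rcases h with ⟨_ | ⟨d, p⟩, q, hij⟩ | ⟨_ | ⟨d, p⟩, q, hij⟩ <;>
    simp only [List.nil_append, List.cons_append, List.cons.injEq] at hw hw' <;>
    obtain ⟨rfl, rfl⟩ := hw <;> obtain ⟨rfl, rfl⟩ := hw'
  · exact ⟨q, by simp [compl_of_far hij, WordEquiv.rfl],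
      by simp [compl_of_far hij.symm, WordEquiv.rfl]⟩
  · exact ⟨_, by simpa using WordEquiv.swap p hij q, by simp [WordEquiv.rfl]⟩
  · exact ⟨q, by simp [compl_of_adj hij, WordEquiv.rfl],
      by simp [compl_of_adj hij.symm, WordEquiv.rfl]⟩
  · exact ⟨_, by simpa using WordEquiv.braid p hij q, by simp [WordEquiv.rfl]⟩

theorem headLemmaBelow (F : ℕ) : HeadLemmaBelow F := by
  induction F with
  | zero => exact fun _ _ _ _ h => absurd h (Nat.not_lt_zero _)
  | succ F IH =>
    intro a b u v hu h
    suffices ∀ w, a :: u ≋ w → ∀ b v, w = b :: v → ∃ t, u ≋ compl a b ++ t ∧ v ≋ compl b a ++ t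
      from this _ h b v rfl
    intro w hw
    induction hw with
    | refl =>
      rintro b v ⟨⟩
      exact ⟨u, by simp [WordEquiv.rfl], by simp [WordEquiv.rfl]⟩
    | @tail w' _ hw hs ih =>
      rintro b v rfl
      have hl : (a :: u).length = w'.length := WordEquiv.length_eq hw
      obtain ⟨c, x, rfl⟩ := List.exists_cons_of_length_pos (by simp [← hl] : 0 < w'.length)
      obtain ⟨s, hus, hxs⟩ := ih c x rfl
      obtain ⟨s', hxs', hvs'⟩ := hs.exists_of_cons rfl rfl
      have hx : x.length ≤ F := by simp at hl; omega
      obtain ⟨t, h₁, h₂⟩ := IH.trans hx hxs hxs'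
      exact ⟨t, hus.trans h₁, hvs'.trans h₂⟩

theorem exists_of_cons_equiv_cons {u v : List ℕ} (h : a :: u ≋ b :: v) :
    ∃ t, u ≋ compl a b ++ t ∧ v ≋ compl b a ++ t :=
  headLemmaBelow (u.length + 1) (Nat.lt_succ_self _) h

namespace WordEquiv

variable {p u v : List ℕ}

lemma cancel_left (h : p ++ u ≋ p ++ v) : u ≋ v :=
  (headLemmaBelow _).cancel_left le_rfl h

lemma cancel_right (h : u ++ p ≋ v ++ p) : u ≋ v := by
  have := cancel_left (p := p.reverse) (u := u.reverse) (v := v.reverse) (by simpa using h.reverse)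
  simpa using this.reverse

end WordEquiv

def IsLcm (u v cu cv : List ℕ) : Prop :=
  u ++ cu ≋ v ++ cv ∧ ∀ x y, u ++ x ≋ v ++ y → ∃ t, x ≋ cu ++ t ∧ y ≋ cv ++ t

namespace IsLcm

variable {u u₁ u₂ v v₁ v₂ c₁ c₂ c₃ c₄ d₁ d₂ d₃ d₄ : List ℕ}

lemma symm (h : IsLcm u v c₁ d₁) : IsLcm v u d₁ c₁ :=
  ⟨h.1.symm, fun x y hxy => (h.2 y x hxy.symm).imp fun _ => And.symm⟩

lemma nil_left (v : List ℕ) : IsLcm [] v v [] :=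
  ⟨by simpa using WordEquiv.rfl, fun _ y h => ⟨y, by simpa using h, by simpa using WordEquiv.rfl⟩⟩

lemma letters (a b : ℕ) : IsLcm [a] [b] (compl a b) (compl b a) :=
  ⟨cons_compl_equiv a b, fun _ _ h => exists_of_cons_equiv_cons h⟩

lemma paste (h₁ : IsLcm u v₁ c₁ d₁) (h₂ : IsLcm d₁ v₂ c₂ d₂) :
    IsLcm u (v₁ ++ v₂) (c₁ ++ c₂) d₂ := by
  refine ⟨?_, fun x y h => ?_⟩
  · calc u ++ (c₁ ++ c₂) = (u ++ c₁) ++ c₂ := (List.append_assoc ..).symm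
      _ ≋ v₁ ++ (d₁ ++ c₂) := by simpa using h₁.1.append_right c₂
      _ ≋ (v₁ ++ v₂) ++ d₂ := by simpa using h₂.1.append_left v₁
  · obtain ⟨t, hx, ht⟩ := h₁.2 x (v₂ ++ y) (by simpa using h)
    obtain ⟨t', ht', hy⟩ := h₂.2 t y ht.symm
    exact ⟨t', by simpa using hx.trans (ht'.append_left c₁), hy⟩

lemma grid (h₁₁ : IsLcm u₁ v₁ c₁ d₁) (h₂₁ : IsLcm d₁ v₂ c₂ d₂) (h₁₂ : IsLcm u₂ c₁ c₃ d₃)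
    (h₂₂ : IsLcm d₃ c₂ c₄ d₄) : IsLcm (u₁ ++ u₂) (v₁ ++ v₂) (c₃ ++ c₄) (d₂ ++ d₄) :=
  ((h₁₁.paste h₂₁).symm.paste (h₁₂.paste h₂₂).symm).symm

end IsLcm

theorem exists_isLcm {u v x y : List ℕ} (h : u ++ x ≋ v ++ y) : ∃ cu cv, IsLcm u v cu cv := by
  induction hN : (u ++ x).length using Nat.strong_induction_on generalizing u v x y with
  | _ N ih =>
  cases u with
  | nil => exact ⟨v, [], .nil_left v⟩
  | cons a u =>
  cases v with
  | nil => exact ⟨[], a :: u, (IsLcm.nil_left _).symm⟩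
  | cons b v =>
  have hl := h.length_eq
  obtain ⟨t₀, hx, hy⟩ := exists_of_cons_equiv_cons (by simpa using h)
  have hlx := hx.length_eq
  have hly := hy.length_eq
  simp only [List.length_append, List.length_cons] at hN hl hlx hly
  obtain ⟨c₃, d₃, h₁₂⟩ := ih _ (by simp; omega) hx rfl
  obtain ⟨t₁, hx₁, ht₁⟩ := h₁₂.2 x t₀ hx
  obtain ⟨c₂, d₂, h₂₁⟩ := ih _ (by simp; omega) hy.symm rfl
  obtain ⟨t₂, ht₂, hy₂⟩ := h₂₁.2 t₀ y hy.symm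
  have hlt := ht₁.length_eq
  simp only [List.length_append] at hlt
  obtain ⟨c₄, d₄, h₂₂⟩ := ih _ (by simp; omega) (ht₁.symm.trans ht₂) rfl
  exact ⟨_, _, (IsLcm.letters a b).grid h₂₁ h₁₂ h₂₂⟩

def desc : ℕ → List ℕ
  | 0 => [0]
  | m + 1 => (m + 1) :: desc m

-- Garside's fundamental braid on the letters `0, …, M - 1`.
def delta : ℕ → List ℕ
  | 0 => []
  | m + 1 => delta m ++ desc m

def deltaPow (M : ℕ) : ℕ → List ℕ
  | 0 => []
  | k + 1 => delta M ++ deltaPow M k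

lemma le_of_mem_desc {m x : ℕ} (hx : x ∈ desc m) : x ≤ m := by
  induction m with
  | zero => simp_all [desc]
  | succ m ih =>
    simp only [desc, List.mem_cons] at hx
    rcases hx with rfl | hx
    · exact le_rfl
    · exact (ih hx).trans (Nat.le_succ m)

lemma lt_of_mem_delta {M x : ℕ} (hx : x ∈ delta M) : x < M := by
  induction M with
  | zero => simp [delta] at hx
  | succ m ih =>
    simp only [delta, List.mem_append] at hx
    rcases hx with hx | hx
    · exact (ih hx).trans (Nat.lt_succ_self m)
    · exact Nat.lt_succ_of_le (le_of_mem_desc hx)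

lemma lt_of_mem_deltaPow {M k x : ℕ} (hx : x ∈ deltaPow M k) : x < M := by
  induction k with
  | zero => simp [deltaPow] at hx
  | succ k ih =>
    simp only [deltaPow, List.mem_append] at hx
    exact hx.elim lt_of_mem_delta ih

lemma deltaPow_add (M a b : ℕ) : deltaPow M (a + b) = deltaPow M a ++ deltaPow M b := by
  induction a with
  | zero => simp [deltaPow]
  | succ a ih => simp [Nat.succ_add, deltaPow, ih]

lemma desc_append_singleton {m j : ℕ} (h₁ : 1 ≤ j) (h₂ : j ≤ m) :
    desc m ++ [j] ≋ (j - 1) :: desc m := by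
  induction m with
  | zero => omega
  | succ m ih =>
    rcases Nat.lt_or_ge j (m + 1) with hj | hj
    · calc (m + 1) :: (desc m ++ [j]) ≋ (m + 1) :: (j - 1) :: desc m := (ih (by omega)).cons _
        _ ≋ (j - 1) :: (m + 1) :: desc m := .swap [] (by unfold Far; omega) _
    obtain rfl : j = m + 1 := by omega
    cases m with
    | zero => exact .braid [] (i := 1) (j := 0) (.inr rfl) []
    | succ m =>
      calc (m + 2) :: (m + 1) :: (desc m ++ [m + 2])
          ≋ (m + 2) :: (m + 1) :: (m + 2) :: desc m := by
            simpa using (cons_append_equiv_of_far (c := m + 2) (w := desc m)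
              (fun y hy => by have := le_of_mem_desc hy; unfold Far; omega) []).symm.append_left
              [m + 2, m + 1]
        _ ≋ (m + 1) :: (m + 2) :: (m + 1) :: desc m := .braid [] (by unfold Adj; omega) _

lemma far_of_lt_of_mem_delta {m x : ℕ} (hx : x ∈ delta m) : Far (m + 1) x := by
  have := lt_of_mem_delta hx; unfold Far; omega

lemma delta_succ_equiv (m : ℕ) : delta (m + 1) ≋ (desc m).reverse ++ delta m := by
  induction m with
  | zero => exact .rfl
  | succ m ih =>
    calc delta (m + 1) ++ desc (m + 1)
        ≋ (desc m).reverse ++ (delta m ++ (m + 1) :: desc m) := by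
          simpa [desc] using ih.append_right (desc (m + 1))
      _ ≋ (desc m).reverse ++ ((m + 1) :: (delta m ++ desc m)) :=
          ((cons_append_equiv_of_far (fun _ => far_of_lt_of_mem_delta) _).symm).append_left _
      _ = (desc (m + 1)).reverse ++ delta (m + 1) := by simp [desc, delta]

lemma delta_append_singleton {M j : ℕ} (hj : j < M) :
    delta M ++ [j] ≋ (M - 1 - j) :: delta M := by
  induction M generalizing j with
  | zero => omega
  | succ m ih =>
    rcases Nat.eq_zero_or_pos j with rfl | hj₀
    · cases m with
      | zero => exact .rfl
      | succ m =>
        have hdesc := (desc_append_singleton (m := m + 1) (j := m + 1) (by omega) le_rfl).reverse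
        simp only [List.reverse_append, List.reverse_cons, List.reverse_nil, List.nil_append,
          Nat.add_sub_cancel] at hdesc
        calc delta (m + 2) ++ [0] ≋ (desc (m + 1)).reverse ++ (delta (m + 1) ++ [0]) := by
              simpa using (delta_succ_equiv (m + 1)).append_right [0]
          _ ≋ (desc (m + 1)).reverse ++ [m] ++ delta (m + 1) := by
              simpa using (ih (j := 0) (by omega)).append_left (desc (m + 1)).reverse
          _ ≋ (m + 1) :: ((desc (m + 1)).reverse ++ delta (m + 1)) := by
              simpa using hdesc.symm.append_right (delta (m + 1))
          _ ≋ (m + 1 + 1 - 1 - 0) :: delta (m + 2) := (delta_succ_equiv (m + 1)).symm.cons _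
    · calc delta m ++ desc m ++ [j] ≋ delta m ++ ((j - 1) :: desc m) := by
            simpa using (desc_append_singleton hj₀ (by omega)).append_left (delta m)
        _ ≋ (m - 1 - (j - 1)) :: delta m ++ desc m := by
            simpa using (ih (j := j - 1) (by omega)).append_right (desc m)
        _ = (m + 1 - 1 - j) :: (delta m ++ desc m) := by
            rw [show m - 1 - (j - 1) = m + 1 - 1 - j by omega]; rfl

lemma delta_append {M : ℕ} {w : List ℕ} (hw : ∀ x ∈ w, x < M) :
    delta M ++ w ≋ w.map (M - 1 - ·) ++ delta M := by
  induction w with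
  | nil => simpa using WordEquiv.rfl
  | cons j w ih =>
    simp only [List.mem_cons, forall_eq_or_imp] at hw
    calc delta M ++ j :: w ≋ (M - 1 - j) :: delta M ++ w := by
          simpa using (delta_append_singleton hw.1).append_right w
      _ ≋ (M - 1 - j) :: (w.map (M - 1 - ·) ++ delta M) := by simpa using (ih hw.2).cons _
      _ = (j :: w).map (M - 1 - ·) ++ delta M := rfl

lemma append_delta {M : ℕ} {w : List ℕ} (hw : ∀ x ∈ w, x < M) :
    w ++ delta M ≋ delta M ++ w.map (M - 1 - ·) := by
  have hw' : ∀ x ∈ w.map (M - 1 - ·), x < M := by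
    simp only [List.mem_map]; rintro _ ⟨x, hx, rfl⟩; have := hw x hx; omega
  have hτ : (w.map (M - 1 - ·)).map (M - 1 - ·) = w := by
    rw [List.map_map]
    exact List.map_congr_left (fun x hx => by have := hw x hx; simp; omega) |>.trans (List.map_id w)
  simpa [hτ] using (delta_append hw').symm

lemma exists_desc_append_desc (k : ℕ) : ∃ w, desc k ++ desc (k + 1) ≋ (k + 1) :: w := by
  induction k with
  | zero => exact ⟨[0, 1], .braid [] (i := 0) (j := 1) (.inl rfl) []⟩
  | succ k ih =>
    obtain ⟨w, hw⟩ := ih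
    refine ⟨(k + 1) :: (k + 2) :: w, ?_⟩
    calc (k + 1) :: (desc k ++ (k + 2) :: desc (k + 1))
        ≋ (k + 1) :: (k + 2) :: (desc k ++ desc (k + 1)) :=
          ((cons_append_equiv_of_far (fun y hy => by
            have := le_of_mem_desc hy; unfold Far; omega) _).symm).cons _
      _ ≋ (k + 1) :: (k + 2) :: (k + 1) :: w := hw.append_left [k + 1, k + 2]
      _ ≋ (k + 2) :: (k + 1) :: (k + 2) :: w := .braid [] (.inl rfl) w

lemma exists_delta_equiv_cons {M j : ℕ} (hj : j < M) : ∃ r, delta M ≋ j :: r := by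
  induction M with
  | zero => omega
  | succ m ih =>
    rcases Nat.lt_or_ge j m with hjm | hjm
    · obtain ⟨r, hr⟩ := ih hjm
      exact ⟨r ++ desc m, by simpa [delta] using hr.append_right (desc m)⟩
    obtain rfl : j = m := by omega
    cases j with
    | zero => exact ⟨[], .rfl⟩
    | succ k =>
      obtain ⟨w, hw⟩ := exists_desc_append_desc k
      refine ⟨delta k ++ w, ?_⟩
      calc delta k ++ desc k ++ desc (k + 1) ≋ delta k ++ (k + 1) :: w := by
            simpa using hw.append_left (delta k)
        _ ≋ (k + 1) :: (delta k ++ w) :=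
            (cons_append_equiv_of_far (fun _ => far_of_lt_of_mem_delta) _).symm

lemma exists_append_deltaPow_equiv {M : ℕ} (k : ℕ) {w : List ℕ} (hw : ∀ x ∈ w, x < M) :
    ∃ w', w ++ deltaPow M k ≋ deltaPow M k ++ w' := by
  induction k generalizing w with
  | zero => exact ⟨w, by simpa [deltaPow] using WordEquiv.rfl⟩
  | succ k ih =>
    have hw' : ∀ x ∈ w.map (M - 1 - ·), x < M := by
      simp only [List.mem_map]; rintro _ ⟨x, hx, rfl⟩; have := hw x hx; omega
    obtain ⟨w', h⟩ := ih hw'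
    refine ⟨w', ?_⟩
    calc w ++ (delta M ++ deltaPow M k) ≋ delta M ++ (w.map (M - 1 - ·) ++ deltaPow M k) := by
          simpa using (append_delta hw).append_right (deltaPow M k)
      _ ≋ delta M ++ deltaPow M k ++ w' := by simpa using h.append_left (delta M)

lemma exists_append_equiv_deltaPow {M : ℕ} {u : List ℕ} (hu : ∀ x ∈ u, x < M) :
    ∃ w, u ++ w ≋ deltaPow M u.length := by
  induction u with
  | nil => exact ⟨[], .rfl⟩
  | cons a u ih =>
    simp only [List.mem_cons, forall_eq_or_imp] at hu
    obtain ⟨w, hw⟩ := ih hu.2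
    obtain ⟨r, hr⟩ := exists_delta_equiv_cons hu.1
    obtain ⟨r', hr'⟩ := exists_append_deltaPow_equiv u.length
      (fun x hx => lt_of_mem_delta (hr.subset (List.mem_cons_of_mem a hx)))
    refine ⟨w ++ r', ?_⟩
    calc a :: u ++ (w ++ r') ≋ a :: (deltaPow M u.length ++ r') := by
          simpa using (hw.append_right r').cons a
      _ ≋ a :: r ++ deltaPow M u.length := by simpa using hr'.symm.cons a
      _ ≋ deltaPow M (u.length + 1) := by simpa [deltaPow] using hr.symm.append_right _

theorem exists_common_right_multiple {M : ℕ} {u v : List ℕ} (hu : ∀ x ∈ u, x < M)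
    (hv : ∀ x ∈ v, x < M) :
    ∃ x y, (∀ z ∈ x, z < M) ∧ (∀ z ∈ y, z < M) ∧ u ++ x ≋ v ++ y := by
  obtain ⟨x, hx⟩ := exists_append_equiv_deltaPow hu
  obtain ⟨y, hy⟩ := exists_append_equiv_deltaPow hv
  have hux : u ++ (x ++ deltaPow M v.length) ≋ deltaPow M (u.length + v.length) := by
    simpa [deltaPow_add] using hx.append_right (deltaPow M v.length)
  have hvy : v ++ (y ++ deltaPow M u.length) ≋ deltaPow M (u.length + v.length) := by
    simpa [deltaPow_add, Nat.add_comm u.length] using hy.append_right (deltaPow M u.length)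
  refine ⟨_, _, fun z hz => ?_, fun z hz => ?_, hux.trans hvy.symm⟩
  · exact lt_of_mem_deltaPow (hux.symm.subset (List.mem_append_right u hz))
  · exact lt_of_mem_deltaPow (hvy.symm.subset (List.mem_append_right v hz))

theorem exists_common_left_multiple {M : ℕ} {u v : List ℕ} (hu : ∀ x ∈ u, x < M)
    (hv : ∀ x ∈ v, x < M) :
    ∃ x y, (∀ z ∈ x, z < M) ∧ (∀ z ∈ y, z < M) ∧ x ++ u ≋ y ++ v := by
  obtain ⟨x, y, hx, hy, h⟩ := exists_common_right_multiple (u := u.reverse) (v := v.reverse)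
    (by simpa using hu) (by simpa using hv)
  exact ⟨x.reverse, y.reverse, by simpa using hx, by simpa using hy, by simpa using h.reverse⟩

def wordSetoid : Setoid (List ℕ) :=
  ⟨WordEquiv, ⟨WordEquiv.refl, WordEquiv.symm, WordEquiv.trans⟩⟩

def PosBraid : Type := Quotient wordSetoid

namespace PosBraid

def mk (w : List ℕ) : PosBraid := Quotient.mk wordSetoid w

lemma mk_eq_mk {u v : List ℕ} : mk u = mk v ↔ u ≋ v := Quotient.eq

@[elab_as_elim]
lemma ind {p : PosBraid → Prop} (h : ∀ w, p (mk w)) (x : PosBraid) : p x := Quotient.ind h x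

instance : Monoid PosBraid where
  mul := Quotient.map₂ (· ++ ·) fun _ _ h _ _ h' => h.append h'
  one := mk []
  mul_assoc x y z := by
    induction x using ind; induction y using ind; induction z using ind
    exact congrArg mk (List.append_assoc ..)
  one_mul x := by induction x using ind; rfl
  mul_one x := by induction x using ind; exact congrArg mk (List.append_nil _)

lemma mk_mul_mk (u v : List ℕ) : mk u * mk v = mk (u ++ v) := rfl

lemma one_def : (1 : PosBraid) = mk [] := rfl

instance : IsCancelMul PosBraid where
  mul_left_cancel x y z h := by
    induction x using ind; induction y using ind; induction z using ind
    exact mk_eq_mk.2 (WordEquiv.cancel_left (mk_eq_mk.1 h))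
  mul_right_cancel x y z h := by
    induction x using ind; induction y using ind; induction z using ind
    exact mk_eq_mk.2 (WordEquiv.cancel_right (mk_eq_mk.1 h))

lemma exists_mul_eq_mul (x y : PosBraid) : ∃ x' y', x' * x = y' * y := by
  induction x using ind with | h u =>
  induction y using ind with | h v =>
  obtain ⟨x, y, -, -, h⟩ := exists_common_left_multiple (M := (u ++ v).sum + 1)
    (fun z hz => Nat.lt_succ_of_le (List.le_sum_of_mem (List.mem_append_left v hz)))
    (fun z hz => Nat.lt_succ_of_le (List.le_sum_of_mem (List.mem_append_right u hz)))
  exact ⟨mk x, mk y, mk_eq_mk.2 h⟩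

noncomputable instance : OreLocalization.OreSet (⊤ : Submonoid PosBraid) where
  ore_right_cancel _ _ s h := ⟨1, by simpa using mul_right_cancel h⟩
  oreNum x s := (exists_mul_eq_mul x s).choose_spec.choose
  oreDenom x s := ⟨(exists_mul_eq_mul x s).choose, trivial⟩
  ore_eq x s := (exists_mul_eq_mul x s).choose_spec.choose_spec

lemma numeratorHom_injective :
    Function.Injective (OreLocalization.numeratorHom (S := (⊤ : Submonoid PosBraid))) := by
  intro x y h
  obtain ⟨u, v, huv, hu⟩ := OreLocalization.oreDiv_eq_iff.1 h
  simp only [OneMemClass.coe_one, mul_one] at hu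
  simp only [Submonoid.smul_def, smul_eq_mul, hu] at huv
  exact (mul_left_cancel huv).symm

end PosBraid

lemma braidRels_lift_eq_one {n : ℕ} {H : Type*} [Group H] (f : Fin (n - 1) → H)
    (hswap : ∀ i j : Fin (n - 1), Far i j → f i * f j = f j * f i)
    (hbraid : ∀ i j : Fin (n - 1), Adj i j → f i * f j * f i = f j * f i * f j) :
    ∀ r ∈ braidRels n, FreeGroup.lift f r = 1 := by
  rintro _ (⟨i, j, hij, rfl⟩ | ⟨i, j, hij, rfl⟩)
  · simp [hswap i j (.inl hij)]
  · simp [hbraid i j (.inl hij)]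

variable {n : ℕ}

lemma of_mul_of_comm {i j : Fin (n - 1)} (h : Far i j) :
    (PresentedGroup.of i : BraidGroup n) * .of j = .of j * .of i := by
  wlog hij : (i : ℕ) + 2 ≤ j generalizing i j
  · exact (this h.symm (h.resolve_left hij)).symm
  have := PresentedGroup.mk_eq_mk_of_mul_inv_mem (rels := braidRels n)
    (x := .of i * .of j) (y := .of j * .of i)
    (by rw [mul_inv_rev, ← mul_assoc]; exact .inl ⟨i, j, hij, rfl⟩)
  simp only [map_mul] at this
  exact this

lemma of_mul_of_mul_of {i j : Fin (n - 1)} (h : Adj i j) :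
    (PresentedGroup.of i : BraidGroup n) * .of j * .of i = .of j * .of i * .of j := by
  wlog hij : (j : ℕ) = i + 1 generalizing i j
  · exact (this h.symm (h.resolve_left hij)).symm
  have := PresentedGroup.mk_eq_mk_of_mul_inv_mem (rels := braidRels n)
    (x := .of i * .of j * .of i) (y := .of j * .of i * .of j) (.inr ⟨i, j, hij, rfl⟩)
  simp only [map_mul] at this
  exact this

noncomputable def gen (n x : ℕ) : BraidGroup n :=
  if h : x < n - 1 then PresentedGroup.of ⟨x, h⟩ else 1

noncomputable def ofWord (n : ℕ) (w : List ℕ) : BraidGroup n := (w.map (gen n)).prod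

@[simp] lemma ofWord_nil : ofWord n [] = 1 := rfl

@[simp] lemma ofWord_cons (a : ℕ) (w : List ℕ) : ofWord n (a :: w) = gen n a * ofWord n w := by
  simp [ofWord]

@[simp] lemma ofWord_append (u v : List ℕ) : ofWord n (u ++ v) = ofWord n u * ofWord n v := by
  simp [ofWord]

lemma ofWord_eq_of_step {u v : List ℕ} (hu : ∀ x ∈ u, x < n - 1) (h : Step u v) :
    ofWord n u = ofWord n v := by
  cases h with
  | @swap p q i j hij =>
    have hi := hu i (by simp)
    have hj := hu j (by simp)
    simp only [ofWord_append, ofWord_cons, gen, dif_pos hi, dif_pos hj]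
    rw [← mul_assoc (PresentedGroup.of _), of_mul_of_comm (n := n) (i := ⟨i, hi⟩) hij, mul_assoc]
  | @braid p q i j hij =>
    have hi := hu i (by simp)
    have hj := hu j (by simp)
    simp only [ofWord_append, ofWord_cons, gen, dif_pos hi, dif_pos hj, ← mul_assoc]
    rw [mul_assoc (ofWord n p), mul_assoc (ofWord n p),
      of_mul_of_mul_of (n := n) (i := ⟨i, hi⟩) hij]
    simp only [mul_assoc]

lemma ofWord_eq_of_equiv {u v : List ℕ} (hu : ∀ x ∈ u, x < n - 1) (h : u ≋ v) :
    ofWord n u = ofWord n v := by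
  induction h with
  | refl => rfl
  | tail huw hs ih =>
    exact ih.trans (ofWord_eq_of_step (fun x hx => hu x (WordEquiv.subset huw hx)) hs)

abbrev PosBraid.Frac : Type := OreLocalization (⊤ : Submonoid PosBraid) PosBraid

open OreLocalization in
noncomputable def letterUnit (i : ℕ) : PosBraid.Fracˣ := numeratorUnit ⟨PosBraid.mk [i], trivial⟩

lemma val_letterUnit (i : ℕ) :
    (letterUnit i : PosBraid.Frac) = OreLocalization.numeratorHom (PosBraid.mk [i]) := rfl

lemma letterUnit_mul_comm {i j : ℕ} (h : Far i j) :
    letterUnit i * letterUnit j = letterUnit j * letterUnit i := by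
  ext
  simp only [Units.val_mul, val_letterUnit, ← map_mul, PosBraid.mk_mul_mk]
  exact congrArg _ (PosBraid.mk_eq_mk.2 (.swap [] h []))

lemma letterUnit_braid {i j : ℕ} (h : Adj i j) :
    letterUnit i * letterUnit j * letterUnit i = letterUnit j * letterUnit i * letterUnit j := by
  ext
  simp only [Units.val_mul, val_letterUnit, ← map_mul, PosBraid.mk_mul_mk]
  exact congrArg _ (PosBraid.mk_eq_mk.2 (.braid [] h []))

noncomputable def toFrac (n : ℕ) : BraidGroup n →* PosBraid.Fracˣ :=
  PresentedGroup.toGroup <| braidRels_lift_eq_one (fun i => letterUnit i)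
    (fun _ _ h => letterUnit_mul_comm h) (fun _ _ h => letterUnit_braid h)

lemma toFrac_ofWord {w : List ℕ} (hw : ∀ x ∈ w, x < n - 1) :
    (toFrac n (ofWord n w) : PosBraid.Frac) = OreLocalization.numeratorHom (PosBraid.mk w) := by
  induction w with
  | nil => rw [ofWord_nil, map_one, Units.val_one, ← PosBraid.one_def, map_one]
  | cons a w ih =>
    simp only [List.mem_cons, forall_eq_or_imp] at hw
    rw [ofWord_cons, map_mul, Units.val_mul, ih hw.2, gen, dif_pos hw.1, toFrac,
      PresentedGroup.toGroup.of, val_letterUnit, ← map_mul, PosBraid.mk_mul_mk]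
    rfl

theorem equiv_of_ofWord_eq {u v : List ℕ} (hu : ∀ x ∈ u, x < n - 1) (hv : ∀ x ∈ v, x < n - 1)
    (h : ofWord n u = ofWord n v) : u ≋ v :=
  PosBraid.mk_eq_mk.1 <| PosBraid.numeratorHom_injective <| by
    rw [← toFrac_ofWord hu, ← toFrac_ofWord hv, h]

def positiveSubmonoid (n : ℕ) : Submonoid (BraidGroup n) where
  carrier := {g | ∃ w, (∀ x ∈ w, x < n - 1) ∧ ofWord n w = g}
  mul_mem' := by
    rintro _ _ ⟨u, hu, rfl⟩ ⟨v, hv, rfl⟩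
    exact ⟨u ++ v, List.forall_mem_append.2 ⟨hu, hv⟩, ofWord_append u v⟩
  one_mem' := ⟨[], by simp, rfl⟩

lemma exists_isLcm_ofWord {u v : List ℕ} (hu : ∀ x ∈ u, x < n - 1) (hv : ∀ x ∈ v, x < n - 1) :
    ∃ ℓ, (positiveSubmonoid n).IsLcm {ofWord n u, ofWord n v} ℓ := by
  obtain ⟨x, y, hx, hy, hxy⟩ := exists_common_right_multiple hu hv
  obtain ⟨cu, cv, hlcm⟩ := exists_isLcm hxy
  obtain ⟨t, hxt, hyt⟩ := hlcm.2 x y hxy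
  have hcu : ∀ z ∈ cu, z < n - 1 := fun z hz => hx z (hxt.subset (List.mem_append_left t hz))
  have hcv : ∀ z ∈ cv, z < n - 1 := fun z hz => hy z (hyt.subset (List.mem_append_left t hz))
  have huv : ofWord n (u ++ cu) = ofWord n (v ++ cv) :=
    ofWord_eq_of_equiv (List.forall_mem_append.2 ⟨hu, hcu⟩) hlcm.1
  refine ⟨ofWord n (u ++ cu), ?_, fun g hg => ?_⟩
  · rintro _ (rfl | rfl)
    · exact ⟨cu, hcu, by simp⟩
    · exact ⟨cv, hcv, by simp [huv]⟩
  obtain ⟨x', hx', hgx⟩ := hg _ (Set.mem_insert _ _)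
  obtain ⟨y', hy', hgy⟩ := hg _ (Set.mem_insert_of_mem _ rfl)
  have hux' := List.forall_mem_append.2 ⟨hu, hx'⟩
  have hg₁ : g = ofWord n (u ++ x') := by rw [ofWord_append, hgx, mul_inv_cancel_left]
  have hg₂ : g = ofWord n (v ++ y') := by rw [ofWord_append, hgy, mul_inv_cancel_left]
  obtain ⟨t', hxt', -⟩ := hlcm.2 x' y'
    (equiv_of_ofWord_eq hux' (List.forall_mem_append.2 ⟨hv, hy'⟩) (hg₁.symm.trans hg₂))
  refine ⟨t', fun z hz => hx' z (hxt'.subset (List.mem_append_right cu hz)), ?_⟩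
  rw [hg₁, ofWord_eq_of_equiv hux' (hxt'.append_left u)]
  simp [mul_assoc]

theorem isLatticeCone_positiveSubmonoid (n : ℕ) : (positiveSubmonoid n).IsLatticeCone where
  eq_one_of_inv_mem := by
    rintro _ ⟨u, hu, rfl⟩ ⟨v, hv, hvu⟩
    have h := (equiv_of_ofWord_eq (List.forall_mem_append.2 ⟨hu, hv⟩) (by simp)
      (by simp [hvu] : ofWord n (u ++ v) = ofWord n [])).length_eq
    simp only [List.length_append, List.length_nil, Nat.add_eq_zero_iff,
      List.length_eq_zero_iff] at h
    simp [h.1]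
  exists_mul_eq_mul := by
    rintro _ ⟨u, hu, rfl⟩ _ ⟨v, hv, rfl⟩
    obtain ⟨x, y, hx, hy, h⟩ := exists_common_left_multiple hu hv
    refine ⟨ofWord n x, ⟨x, hx, rfl⟩, ofWord n y, ⟨y, hy, rfl⟩, ?_⟩
    simpa using ofWord_eq_of_equiv (List.forall_mem_append.2 ⟨hx, hu⟩) h
  closure_eq_top := by
    rw [eq_top_iff, ← PresentedGroup.closure_range_of]
    refine Subgroup.closure_mono ?_
    rintro _ ⟨i, rfl⟩
    exact ⟨[i], by simp, by simp [gen]⟩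
  exists_isLcm := by
    rintro _ ⟨u, hu, rfl⟩ _ ⟨v, hv, rfl⟩
    exact exists_isLcm_ofWord hu hv

end Braid

/-- The braid group `Bₙ` is torsion-free: if `B ∈ Bₙ` satisfies
`B^k = 1` for some integer `k ≥ 1`, then `B = 1`. -/
theorem stmt6 (n : ℕ) (B : BraidGroup n) (k : ℕ) (hk : 1 ≤ k) (h : B ^ k = 1) :
    B = 1 :=
  (Braid.isLatticeCone_positiveSubmonoid n).eq_one_of_isOfFinOrder
    (isOfFinOrder_iff_pow_eq_one.2 ⟨k, hk, h⟩)
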